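/- Let f : ℝ → ℝ be smooth (C^∞) with f(x₀) = f'(x₀) = f''(x₀) = 0 and f'''(x₀) ≠ 0 at some point x₀, and suppose f is nonzero in a punctured neighborhood of x₀. Then the function x ↦ (f(x))^{1/3} (the real cube root of f) is C^∞ in a neighborhood of x₀. -/

import Mathlib

open Filter Function Set Nat
open scoped Topology

/-- The real cube root function: `cbrt x = sign(x) · |x|^(1/3)`. -/
noncomputable def cbrt (x : ℝ) : ℝ := Real.sign x * |x| ^ ((1 : ℝ) / 3)

lemma cbrt_cube_mul (a b : ℝ) : cbrt (a ^ 3 * b) = a * cbrt b := by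
  unfold cbrt
  have habs : |a ^ 3 * b| ^ ((1 : ℝ) / 3) = |a| * |b| ^ ((1 : ℝ) / 3) := by
    rw [abs_mul, abs_pow, Real.mul_rpow (by positivity) (abs_nonneg b)]
    congr 1
    rw [← Real.rpow_natCast |a| 3, ← Real.rpow_mul (abs_nonneg a)]
    norm_num
  have hsign : Real.sign (a ^ 3 * b) * |a| = a * Real.sign b := by
    rcases lt_trichotomy a 0 with ha | rfl | ha
    · rcases lt_trichotomy b 0 with hb | rfl | hb
      · rw [Real.sign_of_pos (mul_pos_of_neg_of_neg (Odd.pow_neg (by decide) ha) hb),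
          Real.sign_of_neg hb, abs_of_neg ha]; ring
      · simp
      · rw [Real.sign_of_neg (mul_neg_of_neg_of_pos (Odd.pow_neg (by decide) ha) hb),
          Real.sign_of_pos hb, abs_of_neg ha]; ring
    · simp
    · rcases lt_trichotomy b 0 with hb | rfl | hb
      · rw [Real.sign_of_neg (mul_neg_of_pos_of_neg (pow_pos ha 3) hb),
          Real.sign_of_neg hb, abs_of_pos ha]; ring
      · simp
      · rw [Real.sign_of_pos (mul_pos (pow_pos ha 3) hb),
          Real.sign_of_pos hb, abs_of_pos ha]; ring
  calc Real.sign (a ^ 3 * b) * |a ^ 3 * b| ^ ((1 : ℝ) / 3)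
      = (Real.sign (a ^ 3 * b) * |a|) * |b| ^ ((1 : ℝ) / 3) := by rw [habs]; ring
    _ = a * (Real.sign b * |b| ^ ((1 : ℝ) / 3)) := by rw [hsign]; ring

lemma contDiffAt_cbrt {y : ℝ} (hy : y ≠ 0) : ContDiffAt ℝ (⊤ : ℕ∞) cbrt y := by
  rcases hy.lt_or_gt with h | h
  · have ev : cbrt =ᶠ[𝓝 y] fun z : ℝ => -((-z) ^ ((1 : ℝ) / 3)) := by
      filter_upwards [Iio_mem_nhds h] with z hz
      have hz' : z < 0 := hz
      simp only [cbrt, Real.sign_of_neg hz', abs_of_neg hz']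
      ring
    have hc : ContDiffAt ℝ (⊤ : ℕ∞) (fun z : ℝ => -((-z) ^ ((1 : ℝ) / 3))) y := by
      have h1 : ContDiffAt ℝ (⊤ : ℕ∞) (fun w : ℝ => w ^ ((1 : ℝ) / 3)) (-y) :=
        Real.contDiffAt_rpow_const_of_ne (by simpa using h.ne)
      exact ((h1.comp y contDiffAt_id.neg).neg)
    exact hc.congr_of_eventuallyEq ev
  · have ev : cbrt =ᶠ[𝓝 y] fun z : ℝ => z ^ ((1 : ℝ) / 3) := by
      filter_upwards [Ioi_mem_nhds h] with z hz
      have hz' : (0:ℝ) < z := hz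
      simp [cbrt, Real.sign_of_pos hz', abs_of_pos hz']
    exact (Real.contDiffAt_rpow_const_of_ne h.ne').congr_of_eventuallyEq ev

lemma param_int_contDiff (a : ℝ) (n : ℕ) : ∀ (ψ : ℝ → ℝ), ContDiff ℝ (⊤ : ℕ∞) ψ → ∀ m : ℕ,
    ContDiff ℝ n (fun x => ∫ t in (0:ℝ)..1, t ^ m * ψ (a + t * (x - a))) := by
  induction n with
  | zero =>
    intro ψ hψ m
    rw [Nat.cast_zero, contDiff_zero]
    apply intervalIntegral.continuous_parametric_intervalIntegral_of_continuous'
    exact (continuous_snd.pow m).mul (hψ.continuous.comp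
      (continuous_const.add (continuous_snd.mul (continuous_fst.sub continuous_const))))
  | succ n ih =>
    intro ψ hψ m
    have hψd := contDiff_infty_iff_deriv.mp hψ
    have hd : ∀ x, HasDerivAt (fun x => ∫ t in (0:ℝ)..1, t ^ m * ψ (a + t * (x - a)))
        (∫ t in (0:ℝ)..1, t ^ (m + 1) * deriv ψ (a + t * (x - a))) x := by
      intro x
      obtain ⟨C, hC⟩ := (isCompact_Icc (a := a - (|x - a| + 1)) (b := a + (|x - a| + 1))).exists_bound_of_continuousOn
        hψd.2.continuous.continuousOn
      have hcont : ∀ y : ℝ, Continuous (fun t : ℝ => t ^ m * ψ (a + t * (y - a))) := fun y =>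
        (continuous_pow m).mul (hψ.continuous.comp
          (continuous_const.add (continuous_id.mul continuous_const)))
      have hcont' : ∀ y : ℝ, Continuous (fun t : ℝ => t ^ (m + 1) * deriv ψ (a + t * (y - a))) :=
        fun y => (continuous_pow (m + 1)).mul (hψd.2.continuous.comp
          (continuous_const.add (continuous_id.mul continuous_const)))
      have := intervalIntegral.hasDerivAt_integral_of_dominated_loc_of_deriv_le
        (μ := MeasureTheory.volume) (a := 0) (b := 1)
        (F := fun x t => t ^ m * ψ (a + t * (x - a)))
        (F' := fun x t => t ^ (m + 1) * deriv ψ (a + t * (x - a)))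
        (bound := fun _ => C) (x₀ := x) (Metric.ball_mem_nhds x one_pos)
        (Filter.Eventually.of_forall fun y => (hcont y).aestronglyMeasurable)
        ((hcont x).intervalIntegrable _ _) (hcont' x).aestronglyMeasurable
        (MeasureTheory.ae_of_all _ fun t ht y hy => ?_) intervalIntegrable_const
        (MeasureTheory.ae_of_all _ fun t ht y hy => ?_)
      · exact this.2
      · rw [Set.uIoc_of_le zero_le_one] at ht
        have hy' : |y - x| < 1 := by simpa [Real.dist_eq] using hy
        have hya : |y - a| ≤ |y - x| + |x - a| := abs_sub_le y x a
        have htb : |t * (y - a)| ≤ |y - a| := by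
          rw [abs_mul, abs_of_pos ht.1]; exact mul_le_of_le_one_left (abs_nonneg _) ht.2
        have hmem : a + t * (y - a) ∈ Set.Icc (a - (|x - a| + 1)) (a + (|x - a| + 1)) := by
          have h' := abs_le.mp (le_refl |t * (y - a)|)
          constructor <;> linarith [h'.1, h'.2]
        have h1 := hC _ hmem
        rw [norm_mul, norm_pow, Real.norm_eq_abs, abs_of_pos ht.1]
        calc t ^ (m + 1) * ‖deriv ψ (a + t * (y - a))‖ ≤ 1 * C :=
              mul_le_mul (pow_le_one₀ ht.1.le ht.2) h1 (norm_nonneg _) zero_le_one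
          _ = C := one_mul C
      · have h1 : HasDerivAt (fun y => a + t * (y - a)) t y := by
          simpa using (((hasDerivAt_id' y).sub_const a).const_mul t).const_add a
        have h2 := ((hψd.1 _).hasDerivAt).comp y h1
        have h3 := h2.const_mul (t ^ m)
        have e : t ^ (m + 1) * deriv ψ (a + t * (y - a)) =
            t ^ m * (deriv ψ (a + t * (y - a)) * t) := by ring
        rw [e]
        exact h3
    rw [Nat.cast_succ]
    refine contDiff_succ_iff_deriv.mpr ⟨fun x => (hd x).differentiableAt, by simp, ?_⟩
    have : deriv (fun x => ∫ t in (0:ℝ)..1, t ^ m * ψ (a + t * (x - a))) =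
        fun x => ∫ t in (0:ℝ)..1, t ^ (m + 1) * deriv ψ (a + t * (x - a)) :=
      funext fun x => (hd x).deriv
    rw [this]
    exact ih (deriv ψ) hψd.2 (m + 1)

lemma hadamard_aux (h : ℝ → ℝ) (hh : ContDiff ℝ (⊤ : ℕ∞) h) (a : ℝ) :
    ∃ k : ℝ → ℝ, ContDiff ℝ (⊤ : ℕ∞) k ∧ k a = deriv h a ∧ ∀ x, h x = h a + (x - a) * k x := by
  have hd := contDiff_infty_iff_deriv.mp hh
  refine ⟨fun x => ∫ t in (0:ℝ)..1, t ^ 0 * deriv h (a + t * (x - a)), ?_, ?_, ?_⟩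
  · rw [contDiff_infty]
    intro n
    exact param_int_contDiff a n _ hd.2 0
  · simp
  · intro x
    rw [← intervalIntegral.integral_const_mul]
    have hx : ∀ t, HasDerivAt (fun t => h (a + t * (x - a)))
        ((x - a) * (t ^ 0 * deriv h (a + t * (x - a)))) t := by
      intro t
      have h1 : HasDerivAt (fun t => a + t * (x - a)) (x - a) t := by
        simpa using ((hasDerivAt_id' t).mul_const (x - a)).const_add a
      have h2 := (hd.1 (a + t * (x - a))).hasDerivAt.comp t h1
      rw [pow_zero, one_mul, mul_comm]
      exact h2
    rw [intervalIntegral.integral_eq_sub_of_hasDerivAt (fun t _ => hx t)]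
    · simp
    · apply Continuous.intervalIntegrable
      exact continuous_const.mul ((continuous_pow 0).mul (hd.2.continuous.comp
        (continuous_const.add (continuous_id.mul continuous_const))))

lemma iter_mul_aux (a : ℝ) (k : ℝ → ℝ) (hk : ContDiff ℝ (⊤ : ℕ∞) k) (n : ℕ) :
    iteratedDeriv (n + 1) (fun x => (x - a) * k x) =
      fun x => ((n : ℝ) + 1) * iteratedDeriv n k x + (x - a) * iteratedDeriv (n + 1) k x := by
  have hdiff : ∀ j : ℕ, Differentiable ℝ (iteratedDeriv j k) := fun j =>
    hk.differentiable_iteratedDeriv j (by exact_mod_cast ENat.coe_lt_top j)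
  induction n with
  | zero =>
    have hkd : Differentiable ℝ k := by simpa using hdiff 0
    ext x
    rw [zero_add, iteratedDeriv_one, iteratedDeriv_zero, iteratedDeriv_one]
    have := ((hasDerivAt_id' x).sub_const a).mul (hkd x).hasDerivAt
    refine this.deriv.trans ?_
    push_cast
    ring
  | succ n ih =>
    ext x
    rw [iteratedDeriv_succ, ih]
    have := ((hasDerivAt_const x ((n : ℝ) + 1)).mul (hdiff n x).hasDerivAt).add
      (((hasDerivAt_id' x).sub_const a).mul (hdiff (n + 1) x).hasDerivAt)
    refine this.deriv.trans ?_
    rw [← iteratedDeriv_succ, ← iteratedDeriv_succ]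
    push_cast
    ring

/-- If `f` is smooth, vanishes to exactly third order at `x₀` (value, first and second
derivatives vanish, third derivative does not), and `f` is nonzero in a punctured
neighborhood of `x₀`, then `x ↦ (f x)^(1/3)` is `C^∞` in a neighborhood of `x₀`. -/
theorem cbrt_comp_smooth_of_third_order_zero (f : ℝ → ℝ) (x₀ : ℝ)
    (hf : ContDiff ℝ (⊤ : ℕ∞) f)
    (h0 : f x₀ = 0) (h1 : deriv f x₀ = 0) (h2 : iteratedDeriv 2 f x₀ = 0)
    (h3 : iteratedDeriv 3 f x₀ ≠ 0)
    (hne : ∀ᶠ x in nhdsWithin x₀ {x₀}ᶜ, f x ≠ 0) :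
    ∃ s ∈ nhds x₀, ContDiffOn ℝ (⊤ : ℕ∞) (fun x => cbrt (f x)) s := by
  obtain ⟨k1, hk1, hk1a, hk1e⟩ := hadamard_aux f hf x₀
  rw [h1] at hk1a
  have hf_eq : f = fun x => (x - x₀) * k1 x := funext fun x => by rw [hk1e x, h0, zero_add]
  have hk1' : deriv k1 x₀ = 0 := by
    have := congrFun (iter_mul_aux x₀ k1 hk1 1) x₀
    rw [← hf_eq] at this
    have e : iteratedDeriv (1 + 1) f x₀ = 0 := h2
    rw [e, sub_self, zero_mul, add_zero, iteratedDeriv_one] at this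
    push_cast at this
    linarith
  obtain ⟨k2, hk2, hk2a, hk2e⟩ := hadamard_aux k1 hk1 x₀
  rw [hk1'] at hk2a
  have hk1_eq : k1 = fun x => (x - x₀) * k2 x := funext fun x => by rw [hk2e x, hk1a, zero_add]
  obtain ⟨g, hg, hk3a, hk3e⟩ := hadamard_aux k2 hk2 x₀
  have hk2_eq : k2 = fun x => (x - x₀) * g x := funext fun x => by rw [hk3e x, hk2a, zero_add]
  have hg0 : g x₀ ≠ 0 := by
    intro hz
    apply h3
    have e3 := congrFun (iter_mul_aux x₀ k1 hk1 2) x₀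
    have e2 := congrFun (iter_mul_aux x₀ k2 hk2 1) x₀
    rw [← hf_eq] at e3
    rw [← hk1_eq] at e2
    have : iteratedDeriv 3 f x₀ = iteratedDeriv (2 + 1) f x₀ := rfl
    rw [this, e3, show iteratedDeriv 2 k1 x₀ = iteratedDeriv (1 + 1) k1 x₀ from rfl, e2,
      iteratedDeriv_one, ← hk3a, hz]
    simp
  have hfeq : ∀ᶠ z in 𝓝 x₀, f z = (z - x₀) ^ 3 * g z := by
    refine Filter.Eventually.of_forall fun z => ?_
    simp only [hf_eq, hk1_eq, hk2_eq]
    ring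
  have hev : ∀ᶠ z in 𝓝 x₀, ContDiffAt ℝ (⊤ : ℕ∞) g z ∧ g z ≠ 0 ∧ f z = (z - x₀) ^ 3 * g z := by
    filter_upwards [Filter.Eventually.of_forall fun z => hg.contDiffAt, hg.continuous.continuousAt.eventually_ne hg0, hfeq] with z h1 h2 h3
    exact ⟨h1, h2, h3⟩
  obtain ⟨s, hs_mem, hs⟩ := hev.exists_mem
  refine ⟨s, hs_mem, ?_⟩
  have hmain : ContDiffOn ℝ (⊤ : ℕ∞) (fun z => (z - x₀) * cbrt (g z)) s := by
    intro x hx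
    obtain ⟨hga, hgx, -⟩ := hs x hx
    exact (((contDiffAt_id.sub contDiffAt_const).mul
      ((contDiffAt_cbrt hgx).comp x hga)).contDiffWithinAt)
  exact hmain.congr fun x hx => by rw [(hs x hx).2.2, cbrt_cube_mul]
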